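/- Cap-Ball-Duality 2 (bias formula): given center c ∈ ℝ^d, radius r > 0, scale s > 0, define β = 2s/√((‖c‖² + r² + s²)² − 4‖c‖²r²), p = (βc, √(1 − β²‖c‖²)) ∈ ℝ^{d+1}, and b = (s√(s² + β²‖c‖²r²) − r²√(1 − β²‖c‖²))/(r² + s²). Then p is a unit vector, i.e., β²‖c‖² ≤ 1, and b satisfies b = (s√(s² + (1 − p_{d+1}²)r²) − p_{d+1}r²)/(r² + s²). -/
import Mathlib


open scoped InnerProductSpace

/-- Append a coordinate `t` to a vector `x ∈ ℝ^d`, giving `(x, t) ∈ ℝ^{d+1}`. -/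
noncomputable def snocE {d : ℕ} (x : EuclideanSpace ℝ (Fin d)) (t : ℝ) :
    EuclideanSpace ℝ (Fin (d + 1)) :=
  (WithLp.equiv 2 (Fin (d + 1) → ℝ)).symm (Fin.snoc (WithLp.equiv 2 (Fin d → ℝ) x) t)

/-- Drop the last coordinate of `y ∈ ℝ^{d+1}`. -/
noncomputable def initE {d : ℕ} (y : EuclideanSpace ℝ (Fin (d + 1))) :
    EuclideanSpace ℝ (Fin d) :=
  (WithLp.equiv 2 (Fin d → ℝ)).symm (fun i => y i.castSucc)

/-- The inverse stereographic embedding `S(x) = (2s/(‖x‖² + s²)) • (x, s) − v`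
with `v = (0,…,0,1)`. -/
noncomputable def sphEmb (d : ℕ) (s : ℝ) (x : EuclideanSpace ℝ (Fin d)) :
    EuclideanSpace ℝ (Fin (d + 1)) :=
  (2 * s / (‖x‖ ^ 2 + s ^ 2)) • snocE x s - EuclideanSpace.single (Fin.last d) 1

/-- The unembedding `S⁻¹(y) = s·(y₁,…,y_d)/(1 + y_{d+1})`. -/
noncomputable def sphUnemb (d : ℕ) (s : ℝ) (y : EuclideanSpace ℝ (Fin (d + 1))) :
    EuclideanSpace ℝ (Fin d) :=
  (s / (1 + y (Fin.last d))) • initE y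


lemma snocE_last' {d : ℕ} (x : EuclideanSpace ℝ (Fin d)) (t : ℝ) :
    snocE x t (Fin.last d) = t := by
  simp [snocE]

lemma norm_snocE_sq' {d : ℕ} (x : EuclideanSpace ℝ (Fin d)) (t : ℝ) :
    ‖snocE x t‖ ^ 2 = ‖x‖ ^ 2 + t ^ 2 := by
  have h1 : ‖snocE x t‖ ^ 2 = ∑ i, (snocE x t i) ^ 2 := by
    rw [EuclideanSpace.norm_eq, Real.sq_sqrt (by positivity)]
    simp [sq_abs]
  have h2 : ‖x‖ ^ 2 = ∑ i, (x i) ^ 2 := by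
    rw [EuclideanSpace.norm_eq, Real.sq_sqrt (by positivity)]
    simp [sq_abs]
  rw [h1, h2, Fin.sum_univ_castSucc]
  simp [snocE]

theorem stmt15 (d : ℕ) (c : EuclideanSpace ℝ (Fin d)) (r s : ℝ)
    (hr : 0 < r) (hs : 0 < s)
    (β : ℝ) (hβ : β = 2 * s / Real.sqrt ((‖c‖ ^ 2 + r ^ 2 + s ^ 2) ^ 2 - 4 * ‖c‖ ^ 2 * r ^ 2))
    (p : EuclideanSpace ℝ (Fin (d + 1)))
    (hp : p = snocE (β • c) (Real.sqrt (1 - β ^ 2 * ‖c‖ ^ 2)))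
    (b : ℝ)
    (hb : b = (s * Real.sqrt (s ^ 2 + β ^ 2 * ‖c‖ ^ 2 * r ^ 2) -
      r ^ 2 * Real.sqrt (1 - β ^ 2 * ‖c‖ ^ 2)) / (r ^ 2 + s ^ 2)) :
    β ^ 2 * ‖c‖ ^ 2 ≤ 1 ∧ ‖p‖ = 1 ∧
    b = (s * Real.sqrt (s ^ 2 + (1 - p (Fin.last d) ^ 2) * r ^ 2) -
      p (Fin.last d) * r ^ 2) / (r ^ 2 + s ^ 2) := by
  have hA : (0:ℝ) ≤ ‖c‖ ^ 2 := by positivity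
  have hD : 0 < (‖c‖ ^ 2 + r ^ 2 + s ^ 2) ^ 2 - 4 * ‖c‖ ^ 2 * r ^ 2 := by
    nlinarith [sq_nonneg (‖c‖ ^ 2 - r ^ 2), pow_pos hs 2, pow_pos hr 2,
      mul_pos (pow_pos hs 2) (pow_pos hr 2), mul_nonneg hA (pow_pos hs 2).le]
  have hβ2 : β ^ 2 = 4 * s ^ 2 / ((‖c‖ ^ 2 + r ^ 2 + s ^ 2) ^ 2 - 4 * ‖c‖ ^ 2 * r ^ 2) := by
    rw [hβ, div_pow, Real.sq_sqrt hD.le]; ring_nf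
  have h1 : β ^ 2 * ‖c‖ ^ 2 ≤ 1 := by
    rw [hβ2, div_mul_eq_mul_div, div_le_one hD]
    nlinarith [sq_nonneg (‖c‖ ^ 2 - r ^ 2 - s ^ 2)]
  have hnn : 0 ≤ 1 - β ^ 2 * ‖c‖ ^ 2 := by linarith
  have hsq : ‖p‖ ^ 2 = 1 := by
    rw [hp, norm_snocE_sq', norm_smul, Real.sq_sqrt hnn, mul_pow]
    simp [sq_abs]
  have hpn : ‖p‖ = 1 := by
    nlinarith [norm_nonneg p, sq_nonneg (‖p‖ - 1), sq_nonneg (‖p‖ + 1)]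
  have hlast : p (Fin.last d) = Real.sqrt (1 - β ^ 2 * ‖c‖ ^ 2) := by
    rw [hp, snocE_last']
  have hlast2 : 1 - p (Fin.last d) ^ 2 = β ^ 2 * ‖c‖ ^ 2 := by
    rw [hlast, Real.sq_sqrt hnn]; ring
  refine ⟨h1, hpn, ?_⟩
  rw [hb, hlast2, hlast]; ring
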